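/- Let H̃ = p₁² + p₂² + (a·q₁ + b)·q₂^(-2/3) on q₂ > 0 and Z̃₃ = p₁(2p₁² + 3p₂²) + (3a/2)(2p₁q₁ + 3p₂q₂)·q₂^(-2/3) + 3b·p₁·q₂^(-2/3). Then {H̃, Z̃₃} = 0. -/

import Mathlib

/-!
Since `d/dq₂ q₂^(-2/3) = -(2/3) q₂^(-5/3)`, writing `q₂^(-2/3) = q₂^(-5/3) · q₂`
turns the bracket, computed from the eight partial derivatives, into a polynomial
identity in `q₁, q₂, p₁, p₂, q₂^(-5/3)`.
-/

noncomputable def pb (F G : ℝ → ℝ → ℝ → ℝ → ℝ) (q1 q2 p1 p2 : ℝ) : ℝ :=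
  deriv (fun x => F x q2 p1 p2) q1 * deriv (fun x => G q1 q2 x p2) p1
  + deriv (fun x => F q1 x p1 p2) q2 * deriv (fun x => G q1 q2 p1 x) p2
  - deriv (fun x => F q1 q2 x p2) p1 * deriv (fun x => G x q2 p1 p2) q1
  - deriv (fun x => F q1 q2 p1 x) p2 * deriv (fun x => G q1 x p1 p2) q2

noncomputable def Ht (a b : ℝ) (q1 q2 p1 p2 : ℝ) : ℝ :=
  p1 ^ 2 + p2 ^ 2 + (a * q1 + b) * q2 ^ (-(2 : ℝ) / 3)

noncomputable def Z3 (a b : ℝ) (q1 q2 p1 p2 : ℝ) : ℝ :=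
  p1 * (2 * p1 ^ 2 + 3 * p2 ^ 2)
  + (3 * a / 2) * (2 * p1 * q1 + 3 * p2 * q2) * q2 ^ (-(2 : ℝ) / 3)
  + 3 * b * p1 * q2 ^ (-(2 : ℝ) / 3)

theorem pb_eq_of_hasDerivAt {F G : ℝ → ℝ → ℝ → ℝ → ℝ} {q1 q2 p1 p2 : ℝ}
    {Fq1 Fq2 Fp1 Fp2 Gq1 Gq2 Gp1 Gp2 : ℝ}
    (hFq1 : HasDerivAt (fun x => F x q2 p1 p2) Fq1 q1)
    (hFq2 : HasDerivAt (fun x => F q1 x p1 p2) Fq2 q2)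
    (hFp1 : HasDerivAt (fun x => F q1 q2 x p2) Fp1 p1)
    (hFp2 : HasDerivAt (fun x => F q1 q2 p1 x) Fp2 p2)
    (hGq1 : HasDerivAt (fun x => G x q2 p1 p2) Gq1 q1)
    (hGq2 : HasDerivAt (fun x => G q1 x p1 p2) Gq2 q2)
    (hGp1 : HasDerivAt (fun x => G q1 q2 x p2) Gp1 p1)
    (hGp2 : HasDerivAt (fun x => G q1 q2 p1 x) Gp2 p2) :
    pb F G q1 q2 p1 p2 = Fq1 * Gp1 + Fq2 * Gp2 - Fp1 * Gq1 - Fp2 * Gq2 := by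
  rw [pb, hFq1.deriv, hFq2.deriv, hFp1.deriv, hFp2.deriv, hGq1.deriv, hGq2.deriv, hGp1.deriv,
    hGp2.deriv]

section

variable (a b q1 q2 p1 p2 : ℝ)

theorem hasDerivAt_Ht_q1 : HasDerivAt (fun x => Ht a b x q2 p1 p2) (a * q2 ^ (-(2 : ℝ) / 3)) q1 :=
  ((((hasDerivAt_id' q1).const_mul a).add_const b).mul_const _).const_add _ |>.congr_deriv (by ring)

theorem hasDerivAt_Ht_q2 (hq2 : q2 ≠ 0) : HasDerivAt (fun x => Ht a b q1 x p1 p2)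
    ((a * q1 + b) * (-(2 : ℝ) / 3 * q2 ^ (-(2 : ℝ) / 3 - 1))) q2 :=
  ((Real.hasDerivAt_rpow_const (Or.inl hq2)).const_mul _).const_add _

theorem hasDerivAt_Ht_p1 : HasDerivAt (fun x => Ht a b q1 q2 x p2) (2 * p1) p1 :=
  ((hasDerivAt_pow 2 p1).add_const _).add_const _ |>.congr_deriv (by ring)

theorem hasDerivAt_Ht_p2 : HasDerivAt (fun x => Ht a b q1 q2 p1 x) (2 * p2) p2 :=
  ((hasDerivAt_pow 2 p2).const_add _).add_const _ |>.congr_deriv (by ring)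

theorem hasDerivAt_Z3_q1 :
    HasDerivAt (fun x => Z3 a b x q2 p1 p2) (3 * a * p1 * q2 ^ (-(2 : ℝ) / 3)) q1 :=
  (((((((hasDerivAt_id' q1).const_mul (2 * p1)).add_const _).const_mul _).mul_const _).const_add
    _).add_const _).congr_deriv (by ring)

theorem hasDerivAt_Z3_q2 (hq2 : q2 ≠ 0) : HasDerivAt (fun x => Z3 a b q1 x p1 p2)
    (9 / 2 * a * p2 * q2 ^ (-(2 : ℝ) / 3) + (3 * a * p1 * q1 + 9 / 2 * a * p2 * q2 + 3 * b * p1) *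
      (-(2 : ℝ) / 3 * q2 ^ (-(2 : ℝ) / 3 - 1))) q2 :=
  have hrpow := Real.hasDerivAt_rpow_const (p := -(2 : ℝ) / 3) (Or.inl hq2)
  (((((((hasDerivAt_id' q2).const_mul (3 * p2)).const_add (2 * p1 * q1)).const_mul (3 * a / 2)).mul
    hrpow).const_add _).add (hrpow.const_mul (3 * b * p1))).congr_deriv (by ring)

theorem hasDerivAt_Z3_p1 : HasDerivAt (fun x => Z3 a b q1 q2 x p2)
    (6 * p1 ^ 2 + 3 * p2 ^ 2 + 3 * (a * q1 + b) * q2 ^ (-(2 : ℝ) / 3)) p1 :=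
  ((((hasDerivAt_id' p1).mul (((hasDerivAt_pow 2 p1).const_mul 2).add_const _)).add
    (((((hasDerivAt_id' p1).const_mul 2).mul_const q1).add_const _).const_mul _
      |>.mul_const _)).add
    (((hasDerivAt_id' p1).const_mul (3 * b)).mul_const _)).congr_deriv (by ring)

theorem hasDerivAt_Z3_p2 : HasDerivAt (fun x => Z3 a b q1 q2 p1 x)
    (6 * p1 * p2 + 9 / 2 * a * q2 * q2 ^ (-(2 : ℝ) / 3)) p2 :=
  ((((((hasDerivAt_pow 2 p2).const_mul 3).const_add _).const_mul p1).add
    (((((hasDerivAt_id' p2).const_mul 3).mul_const q2).const_add _).const_mul _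
      |>.mul_const _)).add_const _).congr_deriv (by ring)

end

theorem stmt2 (a b : ℝ) (q1 q2 p1 p2 : ℝ) (hq2 : 0 < q2) :
    pb (Ht a b) (Z3 a b) q1 q2 p1 p2 = 0 := by
  rw [pb_eq_of_hasDerivAt (hasDerivAt_Ht_q1 ..) (hasDerivAt_Ht_q2 (hq2 := hq2.ne') ..)
    (hasDerivAt_Ht_p1 ..) (hasDerivAt_Ht_p2 ..) (hasDerivAt_Z3_q1 ..)
    (hasDerivAt_Z3_q2 (hq2 := hq2.ne') ..) (hasDerivAt_Z3_p1 ..) (hasDerivAt_Z3_p2 ..)]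
  have hr : q2 ^ (-(2 : ℝ) / 3) = q2 ^ (-(2 : ℝ) / 3 - 1) * q2 := by
    rw [← Real.rpow_add_one hq2.ne']
    norm_num
  rw [hr]
  ring
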